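/- Under the linear SEM with true matrices (B₀, Ω₀), let ξ = min{score_{Ω₀}(B) : B ∈ U_{G} for some DAG G not containing G₀} − p > 0 be the gap, and let a_max, a_min be the extreme eigenvalues of Ω₀Ω₁⁻¹ for a diagonal weight matrix Ω₁. If a_max/a_min ≤ 1 + ξ/p, then B₀ minimizes score_{Ω₁}(B) over all matrices B permutation similar to strictly upper triangular matrices; if the inequality is strict, B₀ is the unique minimizer. -/

import Mathlib

open Matrix

/-- `B` is permutation similar to a strictly upper triangular matrix. -/
def PermStrictUpper {p : ℕ} (B : Matrix (Fin p) (Fin p) ℝ) : Prop :=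
  ∃ σ : Equiv.Perm (Fin p), ∀ i j : Fin p, ¬ i < j → B (σ i) (σ j) = 0

/-- The weighted squared-ℓ₂ score
`score d S B = tr (Ω^{-1/2} (I-B)ᵀ S (I-B) Ω^{-1/2})` with `Ω = diagonal d`. -/
noncomputable def score {p : ℕ} (d : Fin p → ℝ) (S B : Matrix (Fin p) (Fin p) ℝ) : ℝ :=
  (Matrix.diagonal (fun j => (Real.sqrt (d j))⁻¹) * (1 - B)ᵀ * S * (1 - B) *
    Matrix.diagonal (fun j => (Real.sqrt (d j))⁻¹)).trace

/-!
Write `Σ = (I - B₀)⁻ᵀ Ω₀ (I - B₀)⁻¹` and `W = (I - B₀)⁻¹ (I - B)`. Then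
`score_Ω(B) = ∑ⱼ (∑ₖ ω₀ₖ Wₖⱼ²) / ωⱼ`, and `W = I` for `B = B₀`.
If `B` keeps every edge of `B₀`, both are strictly upper triangular in a common order, so `W`
has unit diagonal and the diagonal terms alone give `score_{Ω₁}(B) ≥ score_{Ω₁}(B₀)`, strictly
unless `W = I`. Otherwise the gap gives `score_{Ω₀}(B) ≥ p + ξ`, and changing the weights from
`Ω₀` to `Ω₁` costs at most the factors `a_min` and `a_max`:
`score_{Ω₁}(B) ≥ a_min (p + ξ) ≥ p a_max ≥ score_{Ω₁}(B₀)`.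
-/

namespace Matrix

variable {m α R : Type*} [Fintype m] [LinearOrder α] {b : m → α}

theorem BlockTriangular.mul_apply_self [NonUnitalNonAssocSemiring R] {M N : Matrix m m R}
    (hb : Function.Injective b) (hM : M.BlockTriangular b) (hN : N.BlockTriangular b) (i : m) :
    (M * N) i i = M i i * N i i := by
  rw [mul_apply]
  refine Fintype.sum_eq_single i fun k hki => ?_
  rcases lt_or_gt_of_ne (hb.ne hki) with h | h
  · rw [hM h, zero_mul]
  · rw [hN h, mul_zero]

theorem BlockTriangular.inv_mul_apply_self [DecidableEq m] [CommRing R] {A C : Matrix m m R}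
    (hb : Function.Injective b) (hA : A.BlockTriangular b) (hC : C.BlockTriangular b)
    (hdet : IsUnit A.det) (hA₁ : ∀ i, A i i = 1) (hC₁ : ∀ i, C i i = 1) (i : m) :
    (A⁻¹ * C) i i = 1 := by
  have := A.invertibleOfIsUnitDet hdet
  have hA' := blockTriangular_inv_of_blockTriangular hA
  have hinv : A⁻¹ i i * A i i = 1 := by
    rw [← hA'.mul_apply_self hb hA, nonsing_inv_mul A hdet, one_apply_eq]
  rw [hA'.mul_apply_self hb hC, hC₁, mul_one, ← hinv, hA₁, mul_one]

theorem transpose_mul_diagonal_mul_apply_self [CommSemiring R] [DecidableEq m] (d : m → R)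
    (W : Matrix m m R) (j : m) :
    (Wᵀ * diagonal d * W) j j = ∑ k, d k * W k j ^ 2 := by
  simp only [mul_apply, transpose_apply, diagonal_apply, mul_ite, mul_zero,
    Finset.sum_ite_eq', Finset.mem_univ, if_true]
  exact Finset.sum_congr rfl fun k _ => by ring

end Matrix

section StrictUpperAlong

variable {n R : Type*} [LinearOrder n] [CommRing R]

def StrictUpperAlong (σ : Equiv.Perm n) (B : Matrix n n R) : Prop :=
  ∀ i j : n, ¬ i < j → B (σ i) (σ j) = 0

variable {σ : Equiv.Perm n} {B : Matrix n n R}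

theorem StrictUpperAlong.apply_self (h : StrictUpperAlong σ B) (x : n) : B x x = 0 := by
  simpa using h (σ.symm x) (σ.symm x) (lt_irrefl _)

theorem StrictUpperAlong.one_sub_apply_self (h : StrictUpperAlong σ B) (x : n) :
    (1 - B) x x = 1 := by
  simp [h.apply_self x]

theorem StrictUpperAlong.blockTriangular_one_sub (h : StrictUpperAlong σ B) :
    (1 - B).BlockTriangular σ.symm := by
  intro x y hxy
  have hB : B x y = 0 := by simpa using h (σ.symm x) (σ.symm y) (not_lt.2 hxy.le)
  simp [one_apply_ne (ne_of_apply_ne σ.symm hxy.ne'), hB]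

theorem StrictUpperAlong.det_one_sub [Fintype n] (h : StrictUpperAlong σ B) : (1 - B).det = 1 := by
  rw [← det_submatrix_equiv_self σ, det_of_isUpperTriangular]
  · exact Finset.prod_eq_one fun i _ => h.one_sub_apply_self (σ i)
  · intro i j (hji : j < i)
    rw [submatrix_apply, Matrix.sub_apply, one_apply_ne (σ.injective.ne hji.ne'),
      h i j (not_lt.2 hji.le), sub_zero]

theorem StrictUpperAlong.inv_mul_apply_self [Fintype n] {B₀ : Matrix n n R}
    (h₀ : StrictUpperAlong σ B₀) (h : StrictUpperAlong σ B) (x : n) :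
    ((1 - B₀)⁻¹ * (1 - B)) x x = 1 :=
  h₀.blockTriangular_one_sub.inv_mul_apply_self σ.symm.injective h.blockTriangular_one_sub
    (by rw [h₀.det_one_sub]; exact isUnit_one) h₀.one_sub_apply_self h.one_sub_apply_self x

end StrictUpperAlong

namespace PermStrictUpper

variable {p : ℕ} {B₀ B : Matrix (Fin p) (Fin p) ℝ}

theorem det_one_sub (h : PermStrictUpper B) : (1 - B).det = 1 :=
  let ⟨_, hσ⟩ := h
  StrictUpperAlong.det_one_sub hσ

theorem exists_strictUpperAlong_of_support_subset (h : PermStrictUpper B)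
    (hsupp : ∀ j k, B₀ j k ≠ 0 → B j k ≠ 0) :
    ∃ σ, StrictUpperAlong σ B₀ ∧ StrictUpperAlong σ B :=
  let ⟨σ, hσ⟩ := h
  ⟨σ, fun i j hij => by_contra fun h₀ => hsupp _ _ h₀ (hσ i j hij), hσ⟩

end PermStrictUpper

section WeightedSums

variable {m : Type*} [Fintype m]

theorem mul_sum_div_le_sum_div {a : ℝ} {c d₀ d₁ : m → ℝ} (hc : ∀ j, 0 ≤ c j)
    (hd₀ : ∀ j, 0 < d₀ j) (ha : ∀ j, a ≤ d₀ j / d₁ j) :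
    a * ∑ j, c j / d₀ j ≤ ∑ j, c j / d₁ j := by
  rw [Finset.mul_sum]
  refine Finset.sum_le_sum fun j _ => ?_
  calc a * (c j / d₀ j) ≤ d₀ j / d₁ j * (c j / d₀ j) :=
        mul_le_mul_of_nonneg_right (ha j) (div_nonneg (hc j) (hd₀ j).le)
    _ = c j / d₁ j := by field_simp [(hd₀ j).ne']

variable {d₀ d : m → ℝ} {W : Matrix m m ℝ} {j : m}

theorem le_sum_mul_sq_of_apply_self_eq_one (hd₀ : ∀ k, 0 ≤ d₀ k) (hW : W j j = 1) :
    d₀ j ≤ ∑ k, d₀ k * W k j ^ 2 := by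
  simpa [hW] using Finset.single_le_sum (fun k _ => mul_nonneg (hd₀ k) (sq_nonneg (W k j)))
    (Finset.mem_univ j)

theorem lt_sum_mul_sq_of_apply_self_eq_one (hd₀ : ∀ k, 0 < d₀ k) (hW : W j j = 1) {k : m}
    (hkj : k ≠ j) (hWkj : W k j ≠ 0) : d₀ j < ∑ k, d₀ k * W k j ^ 2 := by
  classical
  have hpair := Finset.sum_le_sum_of_subset_of_nonneg (Finset.subset_univ {j, k})
    fun i _ _ => mul_nonneg (hd₀ i).le (sq_nonneg (W i j))
  rw [Finset.sum_pair hkj.symm, hW, one_pow, mul_one] at hpair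
  have : 0 < d₀ k * W k j ^ 2 := mul_pos (hd₀ k) (by positivity)
  linarith

theorem sum_div_le_sum_sq_div [DecidableEq m] (hd₀ : ∀ k, 0 ≤ d₀ k) (hd : ∀ j, 0 ≤ d j)
    (hW : ∀ j, W j j = 1) : ∑ j, d₀ j / d j ≤ ∑ j, (∑ k, d₀ k * W k j ^ 2) / d j :=
  Finset.sum_le_sum fun j _ =>
    div_le_div_of_nonneg_right (le_sum_mul_sq_of_apply_self_eq_one hd₀ (hW j)) (hd j)

theorem sum_div_lt_sum_sq_div [DecidableEq m] (hd₀ : ∀ k, 0 < d₀ k) (hd : ∀ j, 0 < d j)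
    (hW : ∀ j, W j j = 1) (hW₁ : W ≠ 1) :
    ∑ j, d₀ j / d j < ∑ j, (∑ k, d₀ k * W k j ^ 2) / d j := by
  obtain ⟨k, j, hkj⟩ : ∃ k j, W k j ≠ (1 : Matrix m m ℝ) k j := by
    by_contra! h
    exact hW₁ (Matrix.ext h)
  have hne : k ≠ j := by
    rintro rfl
    exact hkj (by rw [hW, one_apply_eq])
  rw [one_apply_ne hne] at hkj
  refine Finset.sum_lt_sum (fun i _ => div_le_div_of_nonneg_right
    (le_sum_mul_sq_of_apply_self_eq_one (fun k => (hd₀ k).le) (hW i)) (hd i).le)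
    ⟨j, Finset.mem_univ j, ?_⟩
  exact div_lt_div_of_pos_right (lt_sum_mul_sq_of_apply_self_eq_one hd₀ (hW j) hne hkj) (hd j)

end WeightedSums

noncomputable def semCovariance {p : ℕ} (B₀ : Matrix (Fin p) (Fin p) ℝ) (d₀ : Fin p → ℝ) :
    Matrix (Fin p) (Fin p) ℝ :=
  ((1 - B₀)ᵀ)⁻¹ * diagonal d₀ * (1 - B₀)⁻¹

section Score

variable {p : ℕ} {d d₀ : Fin p → ℝ} {B₀ B : Matrix (Fin p) (Fin p) ℝ}

theorem score_eq_sum_div (hd : ∀ j, 0 ≤ d j) (S B : Matrix (Fin p) (Fin p) ℝ) :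
    score d S B = ∑ j, ((1 - B)ᵀ * S * (1 - B) : Matrix (Fin p) (Fin p) ℝ) j j / d j := by
  simp only [score, trace, diag_apply, Matrix.mul_assoc, diagonal_mul]
  simp only [← Matrix.mul_assoc, mul_diagonal]
  refine Finset.sum_congr rfl fun j _ => ?_
  have hsqrt : (√(d j))⁻¹ * (√(d j))⁻¹ = (d j)⁻¹ := by
    rw [← mul_inv, Real.mul_self_sqrt (hd j)]
  rw [div_eq_mul_inv, ← hsqrt]
  ring

theorem score_semCovariance (hd : ∀ j, 0 ≤ d j) :
    score d (semCovariance B₀ d₀) B =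
      ∑ j, (∑ k, d₀ k * ((1 - B₀)⁻¹ * (1 - B)) k j ^ 2) / d j := by
  rw [score_eq_sum_div hd]
  refine Finset.sum_congr rfl fun j _ => ?_
  rw [← transpose_mul_diagonal_mul_apply_self, transpose_mul, transpose_nonsing_inv,
    semCovariance]
  simp only [Matrix.mul_assoc]

theorem score_semCovariance_self (hd : ∀ j, 0 ≤ d j) (hB₀ : IsUnit (1 - B₀).det) :
    score d (semCovariance B₀ d₀) B₀ = ∑ j, d₀ j / d j := by
  rw [score_semCovariance hd, nonsing_inv_mul _ hB₀]
  refine Finset.sum_congr rfl fun j _ => ?_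
  rw [Fintype.sum_eq_single j fun k hkj => by simp [one_apply_ne hkj]]
  simp

theorem score_semCovariance_self_le (hd : ∀ j, 0 ≤ d j) (hB₀ : IsUnit (1 - B₀).det) {a : ℝ}
    (ha : ∀ j, d₀ j / d j ≤ a) : score d (semCovariance B₀ d₀) B₀ ≤ p * a := by
  rw [score_semCovariance_self hd hB₀]
  simpa using Finset.sum_le_sum fun j (_ : j ∈ Finset.univ) => ha j

theorem mul_score_semCovariance_le {d₁ : Fin p → ℝ} (hd₀ : ∀ j, 0 < d₀ j)
    (hd₁ : ∀ j, 0 ≤ d₁ j) {a : ℝ} (ha : ∀ j, a ≤ d₀ j / d₁ j) :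
    a * score d₀ (semCovariance B₀ d₀) B ≤ score d₁ (semCovariance B₀ d₀) B := by
  rw [score_semCovariance fun j => (hd₀ j).le, score_semCovariance hd₁]
  exact mul_sum_div_le_sum_div
    (fun j => Finset.sum_nonneg fun k _ => mul_nonneg (hd₀ k).le (sq_nonneg _)) hd₀ ha

variable {σ : Equiv.Perm (Fin p)}

theorem score_semCovariance_le_of_strictUpperAlong (hd₀ : ∀ j, 0 ≤ d₀ j) (hd : ∀ j, 0 ≤ d j)
    (h₀ : StrictUpperAlong σ B₀) (h : StrictUpperAlong σ B) :
    score d (semCovariance B₀ d₀) B₀ ≤ score d (semCovariance B₀ d₀) B := by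
  rw [score_semCovariance_self hd (by rw [h₀.det_one_sub]; exact isUnit_one),
    score_semCovariance hd]
  exact sum_div_le_sum_sq_div hd₀ hd (h₀.inv_mul_apply_self h)

theorem score_semCovariance_lt_of_strictUpperAlong (hd₀ : ∀ j, 0 < d₀ j) (hd : ∀ j, 0 < d j)
    (h₀ : StrictUpperAlong σ B₀) (h : StrictUpperAlong σ B) (hne : B ≠ B₀) :
    score d (semCovariance B₀ d₀) B₀ < score d (semCovariance B₀ d₀) B := by
  have hdet : IsUnit (1 - B₀).det := by rw [h₀.det_one_sub]; exact isUnit_one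
  rw [score_semCovariance_self (fun j => (hd j).le) hdet,
    score_semCovariance fun j => (hd j).le]
  refine sum_div_lt_sum_sq_div hd₀ hd (h₀.inv_mul_apply_self h) fun hW => hne ?_
  have : 1 - B = 1 - B₀ := by
    rw [← mul_nonsing_inv_cancel_left (A := 1 - B₀) (1 - B) hdet, hW, mul_one]
  exact sub_right_injective this

end Score

theorem div_le_one_add_div_iff {a b p ξ : ℝ} (ha : 0 < a) (hp : 0 < p) :
    b / a ≤ 1 + ξ / p ↔ p * b ≤ a * (p + ξ) := by
  rw [one_add_div hp.ne', div_le_div_iff₀ ha hp]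
  constructor <;> intro h <;> linarith

theorem div_lt_one_add_div_iff {a b p ξ : ℝ} (ha : 0 < a) (hp : 0 < p) :
    b / a < 1 + ξ / p ↔ p * b < a * (p + ξ) := by
  rw [one_add_div hp.ne', div_lt_div_iff₀ ha hp]
  constructor <;> intro h <;> linarith

theorem stmt_14_general (p : ℕ)
    (B₀ : Matrix (Fin p) (Fin p) ℝ) (hB₀ : PermStrictUpper B₀)
    (d₀ d₁ : Fin p → ℝ) (hd₀ : ∀ j, 0 < d₀ j) (hd₁ : ∀ j, 0 < d₁ j)
    (S : Matrix (Fin p) (Fin p) ℝ)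
    (hS : S = ((1 - B₀)ᵀ)⁻¹ * Matrix.diagonal d₀ * (1 - B₀)⁻¹)
    (ξ : ℝ)
    (hgap : ∀ B : Matrix (Fin p) (Fin p) ℝ, PermStrictUpper B →
      (∃ j k : Fin p, B₀ j k ≠ 0 ∧ B j k = 0) → (p : ℝ) + ξ ≤ score d₀ S B)
    (amin amax : ℝ) (hamin : 0 < amin)
    (hmin : ∀ j, amin ≤ d₀ j / d₁ j) (hmax : ∀ j, d₀ j / d₁ j ≤ amax)
    (hratio : amax / amin ≤ 1 + ξ / p) :
    (∀ B : Matrix (Fin p) (Fin p) ℝ, PermStrictUpper B →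
      score d₁ S B₀ ≤ score d₁ S B) ∧
    (amax / amin < 1 + ξ / p →
      ∀ B : Matrix (Fin p) (Fin p) ℝ, PermStrictUpper B → B ≠ B₀ →
        score d₁ S B₀ < score d₁ S B) := by
  change S = semCovariance B₀ d₀ at hS
  subst hS
  have hdet : IsUnit (1 - B₀).det := by rw [hB₀.det_one_sub]; exact isUnit_one
  have hself := score_semCovariance_self_le (fun j => (hd₁ j).le) hdet hmax
  have hmissing : ∀ B, PermStrictUpper B → (∃ j k : Fin p, B₀ j k ≠ 0 ∧ B j k = 0) →
      (0 : ℝ) < p ∧ amin * (p + ξ) ≤ score d₁ (semCovariance B₀ d₀) B := fun B hB hBmiss =>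
    ⟨by exact_mod_cast hBmiss.choose.pos,
      (mul_le_mul_of_nonneg_left (hgap B hB hBmiss) hamin.le).trans
        (mul_score_semCovariance_le hd₀ (fun j => (hd₁ j).le) hmin)⟩
  refine ⟨fun B hB => ?_, fun hlt B hB hne => ?_⟩ <;>
    by_cases hmiss : ∃ j k : Fin p, B₀ j k ≠ 0 ∧ B j k = 0
  · obtain ⟨hp, hscore⟩ := hmissing B hB hmiss
    linarith [(div_le_one_add_div_iff hamin hp).1 hratio]
  · obtain ⟨σ, h₀, h⟩ := hB.exists_strictUpperAlong_of_support_subset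
      fun j k h₀ h => hmiss ⟨j, k, h₀, h⟩
    exact score_semCovariance_le_of_strictUpperAlong (fun j => (hd₀ j).le) (fun j => (hd₁ j).le)
      h₀ h
  · obtain ⟨hp, hscore⟩ := hmissing B hB hmiss
    linarith [(div_lt_one_add_div_iff hamin hp).1 hlt]
  · obtain ⟨σ, h₀, h⟩ := hB.exists_strictUpperAlong_of_support_subset
      fun j k h₀ h => hmiss ⟨j, k, h₀, h⟩
    exact score_semCovariance_lt_of_strictUpperAlong hd₀ hd₁ h₀ h hne

/-- Misspecified-weights theorem. Under the linear SEM with true `(B₀, Ω₀ = diagonal d₀)` and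
covariance `Σ = (I-B₀)⁻ᵀ Ω₀ (I-B₀)⁻¹`, suppose `ξ > 0` is a gap such that every `B ∈ U` whose
support does not contain the support of `B₀` (i.e. lying in `U_G` for some DAG `G ⊉ G₀`) has
`score_{Ω₀}(B) ≥ p + ξ`, and let `a_min, a_max` bound the diagonal entries of `Ω₀ Ω₁⁻¹`.
If `a_max / a_min ≤ 1 + ξ/p`, then `B₀` minimizes `score_{Ω₁}` over `U`; if the inequality is
strict, `B₀` is the unique minimizer. -/
theorem stmt_14 (p : ℕ) (hp : 0 < p)
    (B₀ : Matrix (Fin p) (Fin p) ℝ) (hB₀ : PermStrictUpper B₀)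
    (d₀ d₁ : Fin p → ℝ) (hd₀ : ∀ j, 0 < d₀ j) (hd₁ : ∀ j, 0 < d₁ j)
    (S : Matrix (Fin p) (Fin p) ℝ)
    (hS : S = ((1 - B₀)ᵀ)⁻¹ * Matrix.diagonal d₀ * (1 - B₀)⁻¹)
    (ξ : ℝ) (hξ : 0 < ξ)
    (hgap : ∀ B : Matrix (Fin p) (Fin p) ℝ, PermStrictUpper B →
      (∃ j k : Fin p, B₀ j k ≠ 0 ∧ B j k = 0) → (p : ℝ) + ξ ≤ score d₀ S B)
    (amin amax : ℝ) (hamin : 0 < amin)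
    (hmin : ∀ j, amin ≤ d₀ j / d₁ j) (hmax : ∀ j, d₀ j / d₁ j ≤ amax)
    (hratio : amax / amin ≤ 1 + ξ / p) :
    (∀ B : Matrix (Fin p) (Fin p) ℝ, PermStrictUpper B →
      score d₁ S B₀ ≤ score d₁ S B) ∧
    (amax / amin < 1 + ξ / p →
      ∀ B : Matrix (Fin p) (Fin p) ℝ, PermStrictUpper B → B ≠ B₀ →
        score d₁ S B₀ < score d₁ S B) :=
  stmt_14_general p B₀ hB₀ d₀ d₁ hd₀ hd₁ S hS ξ hgap amin amax hamin hmin hmax hratio
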